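/- For the target block diagonal affinity matrix W, the characteristic polynomial of the Laplacian matrix L equals X^K · ∏_{i=1}^{K} (X − N_i w_i)^{N_i − 1}; that is, the eigenvalues of L, counted with multiplicity, consist of K zeros together with, for each block i, the value N_i w_i repeated N_i − 1 times. -/

import Mathlib

/-!
The Laplacian is block diagonal along `β`, so its characteristic polynomial is the product of
those of its diagonal blocks. The block of index `k`, of size `d`, is `c • 1 - a • J` with
`a = w k`, `J` the all-ones matrix and `c = d * a`; the rank-one matrix `a • J` has
characteristic polynomial `X ^ d - d a X ^ (d - 1)`, and shifting by `c` turns it into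
`X * (X - c) ^ (d - 1)`. The interval hypothesis on `β` gives the block of index `k` at most
`n k` elements, and since the block sizes add up to `N = ∑ n k`, exactly `n k`.
-/

open Polynomial Matrix Finset

namespace Matrix

variable {ι κ R : Type*} [DecidableEq ι] [CommRing R]

theorem charpoly_scalar_sub_of_const [Fintype ι] [Nonempty ι] (a : R) :
    (scalar ι (Fintype.card ι * a) - of fun _ _ => a).charpoly =
      X * (X - C (Fintype.card ι * a)) ^ (Fintype.card ι - 1) := by
  set c : R := Fintype.card ι * a
  have hvec : (scalar ι c - of fun _ _ => a) =
      vecMulVec (fun _ => -a) (fun _ => 1) - scalar ι (-c) := by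
    ext i j
    by_cases h : i = j
    · simp [vecMulVec_apply, h]
      ring
    · simp [vecMulVec_apply, h]
  obtain ⟨k, hk⟩ : ∃ k, Fintype.card ι = k + 1 := Nat.exists_eq_add_one.mpr Fintype.card_pos
  rw [hvec, charpoly_sub_scalar, charpoly_vecMulVec, hk]
  simp only [dotProduct, mul_one, sum_const, card_univ, hk, smul_neg, add_tsub_cancel_right,
    map_neg]
  have hc : c = (k + 1) • a := by simp [c, hk, nsmul_eq_mul]
  rw [← hc, smul_eq_C_mul, sub_comp, mul_comp, pow_comp, pow_comp, X_comp, C_comp,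
    ← sub_eq_add_neg, C_neg]
  ring

def laplacian [Fintype ι] (W : Matrix ι ι R) : Matrix ι ι R :=
  diagonal (fun m => ∑ p, W m p) - W

variable [DecidableEq κ] (β : ι → κ) (w : κ → R)

def blockAffinity : Matrix ι ι R :=
  of fun m p => if m ≠ p ∧ β m = β p then w (β m) else 0

@[simp]
theorem blockAffinity_apply_self (m : ι) : blockAffinity β w m m = 0 := by
  simp [blockAffinity]

variable [Fintype ι]

theorem sum_blockAffinity_apply (m : ι) :
    ∑ p, blockAffinity β w m p = Fintype.card {p // β p = β m} * w (β m) - w (β m) := by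
  have hrow : ∀ p, blockAffinity β w m p =
      (if β p = β m then w (β m) else 0) - if m = p then w (β m) else 0 := by
    intro p
    by_cases hmp : m = p
    · simp [blockAffinity, hmp]
    · simp [blockAffinity, hmp, eq_comm]
  simp only [hrow, sum_sub_distrib, sum_ite_eq, mem_univ, if_true, ← sum_filter, sum_const,
    Fintype.card_subtype, nsmul_eq_mul]

theorem laplacian_blockAffinity_apply_of_ne {m p : ι} (h : β m ≠ β p) :
    laplacian (blockAffinity β w) m p = 0 := by
  have hmp : m ≠ p := fun e => h (congrArg β e)
  simp [laplacian, blockAffinity, hmp, h]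

theorem blockTriangular_laplacian_blockAffinity [LinearOrder κ] :
    (laplacian (blockAffinity β w)).BlockTriangular β :=
  fun _ _ h => laplacian_blockAffinity_apply_of_ne β w h.ne'

theorem toSquareBlock_laplacian_blockAffinity (k : κ) :
    (laplacian (blockAffinity β w)).toSquareBlock β k =
      scalar _ (Fintype.card {m // β m = k} * w k) - of fun _ _ => w k := by
  ext ⟨m, rfl⟩ ⟨p, hp⟩
  by_cases hmp : m = p
  · subst hmp
    simp [toSquareBlock_def, laplacian, sum_blockAffinity_apply]
  · have hmp' : (⟨m, rfl⟩ : {q // β q = β m}) ≠ ⟨p, hp⟩ :=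
      fun e => hmp (congrArg Subtype.val e)
    simp [toSquareBlock_def, laplacian, blockAffinity, hmp, hmp', hp.symm]

theorem charpoly_laplacian_blockAffinity [Fintype κ] [LinearOrder κ]
    (hβ : Function.Surjective β) :
    (laplacian (blockAffinity β w)).charpoly =
      ∏ k, X * (X - C (Fintype.card {m // β m = k} * w k)) ^
        (Fintype.card {m // β m = k} - 1) := by
  rw [charpoly, (blockTriangular_laplacian_blockAffinity β w).charmatrix.det_fintype]
  refine prod_congr rfl fun k _ => ?_
  rw [← charmatrix_toSquareBlock]
  have : Nonempty {m // β m = k} := let ⟨m, hm⟩ := hβ k; ⟨⟨m, hm⟩⟩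
  rw [← charpoly, toSquareBlock_laplacian_blockAffinity, charpoly_scalar_sub_of_const]

end Matrix

section ConsecutiveBlocks

variable {κ : Type*} [DecidableEq κ] {N : ℕ} (β : Fin N → κ) (s n : κ → ℕ)

theorem card_fiber_le_of_forall_mem_Ico (h : ∀ m, s (β m) ≤ m ∧ (m : ℕ) < s (β m) + n (β m))
    (k : κ) : Fintype.card {m // β m = k} ≤ n k := by
  rw [Fintype.card_subtype]
  calc #{m | β m = k} ≤ #(Ico (s k) (s k + n k)) := by
        refine card_le_card_of_injOn Fin.val (fun m hm => ?_) Fin.val_injective.injOn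
        obtain rfl : β m = k := (mem_filter.mp hm).2
        simpa using h m
    _ = n k := by simp

theorem card_fiber_eq_of_forall_mem_Ico [Fintype κ] (hN : N = ∑ k, n k)
    (h : ∀ m, s (β m) ≤ m ∧ (m : ℕ) < s (β m) + n (β m)) (k : κ) :
    Fintype.card {m // β m = k} = n k := by
  have hsum : ∑ k, Fintype.card {m // β m = k} = ∑ k, n k := by
    simp only [Fintype.card_subtype, ← hN]
    simpa using
      (card_eq_sum_card_fiberwise (f := β) (s := univ) (t := univ) fun _ _ => mem_univ _).symm
  exact (sum_eq_sum_iff_of_le fun k _ => card_fiber_le_of_forall_mem_Ico β s n h k).mp hsum k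
    (mem_univ k)

end ConsecutiveBlocks

theorem target_laplacian_charpoly_general
    (K : ℕ)
    (n : Fin K → ℕ) (hn : ∀ i, 2 ≤ n i)
    (w : Fin K → ℝ)
    (N : ℕ) (hN : N = ∑ i, n i)
    (β : Fin N → Fin K)
    (hβ : ∀ m : Fin N,
      (∑ k ∈ Finset.univ.filter (fun k => k < β m), n k) ≤ m.val ∧
      m.val < (∑ k ∈ Finset.univ.filter (fun k => k < β m), n k) + n (β m))
    (W : Matrix (Fin N) (Fin N) ℝ)
    (hW : ∀ m p, W m p = if m ≠ p ∧ β m = β p then w (β m) else 0)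
    (D : Matrix (Fin N) (Fin N) ℝ)
    (hD : D = Matrix.diagonal (fun m => ∑ p, W m p))
    (L : Matrix (Fin N) (Fin N) ℝ)
    (hL : L = D - W) :
    L.charpoly =
      Polynomial.X ^ K *
        ∏ i, (Polynomial.X - Polynomial.C ((n i : ℝ) * w i)) ^ (n i - 1) := by
  have hcard :=
    card_fiber_eq_of_forall_mem_Ico β (fun k => ∑ j ∈ univ.filter (· < k), n j) n hN hβ
  have hsurj : Function.Surjective β := fun k => by
    obtain ⟨⟨m, hm⟩⟩ : Nonempty {m // β m = k} :=
      Fintype.card_pos_iff.mp (by rw [hcard]; linarith [hn k])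
    exact ⟨m, hm⟩
  have hLap : L = laplacian (blockAffinity β w) := by
    rw [hL, hD, show W = blockAffinity β w from Matrix.ext hW]
    rfl
  rw [hLap, charpoly_laplacian_blockAffinity β w hsurj, prod_mul_distrib, prod_const, card_univ,
    Fintype.card_fin]
  simp only [hcard]

/-- For the target block diagonal affinity matrix `W`, the characteristic
polynomial of the Laplacian matrix `L` equals `X ^ K * ∏ i, (X - C (n i * w i)) ^ (n i - 1)`;
that is, the eigenvalues of `L`, counted with multiplicity, consist of `K` zeros together
with, for each block `i`, the value `n i * w i` repeated `n i - 1` times. -/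
theorem target_laplacian_charpoly
    (K : ℕ) (hK : 1 ≤ K)
    (n : Fin K → ℕ) (hn : ∀ i, 2 ≤ n i)
    (w : Fin K → ℝ) (hw : ∀ i, 0 < w i)
    (N : ℕ) (hN : N = ∑ i, n i)
    (β : Fin N → Fin K)
    (hβ : ∀ m : Fin N,
      (∑ k ∈ Finset.univ.filter (fun k => k < β m), n k) ≤ m.val ∧
      m.val < (∑ k ∈ Finset.univ.filter (fun k => k < β m), n k) + n (β m))
    (W : Matrix (Fin N) (Fin N) ℝ)
    (hW : ∀ m p, W m p = if m ≠ p ∧ β m = β p then w (β m) else 0)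
    (D : Matrix (Fin N) (Fin N) ℝ)
    (hD : D = Matrix.diagonal (fun m => ∑ p, W m p))
    (L : Matrix (Fin N) (Fin N) ℝ)
    (hL : L = D - W) :
    L.charpoly =
      Polynomial.X ^ K *
        ∏ i, (Polynomial.X - Polynomial.C ((n i : ℝ) * w i)) ^ (n i - 1) :=
  target_laplacian_charpoly_general K n hn w N hN β hβ W hW D hD L hL
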